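/- Let α ≥ 2 and κ ≥ ω be cardinals, and let λ and μ be cardinals with α ≤ λ ≤ (α^{<κ})^{<κ} and κ ≤ μ ≤ 2^{((α^{<κ})^{<κ})}. Then: (a) α^{<κ} ≤ d(((D(λ))^μ)_κ) ≤ (α^{<κ})^{<κ}; and (b) if κ is regular or some cardinal ν < κ satisfies α^ν = α^{<κ}, then d(((D(λ))^μ)_κ) = α^{<κ}. -/

import Mathlib

open Cardinal TopologicalSpace Set

universe u

/-- The `κ`-box topology on a product of topological spaces: generated by the boxes
`Π i, U i` with each `U i` open and fewer than `κ` coordinates restricted. -/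
def boxTopology (κ : Cardinal.{u}) {ι : Type u} (X : ι → Type u)
    [∀ i, TopologicalSpace (X i)] : TopologicalSpace (∀ i, X i) :=
  TopologicalSpace.generateFrom
    {S | ∃ U : ∀ i, Set (X i), (∀ i, IsOpen (U i)) ∧
      #{i | U i ≠ Set.univ} < κ ∧ S = Set.pi Set.univ U}

/-- The density character of a topological space: the least cardinality of a dense subset
(finite values allowed). -/
noncomputable def dens (X : Type u) [TopologicalSpace X] : Cardinal.{u} :=
  sInf {c | ∃ D : Set X, Dense D ∧ #D = c}

/-! Write `β = α ^< κ` and `Δ = β ^< κ`. A set `D ⊆ L ^ M` is dense in the `κ`-box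
topology iff every function agrees with a member of `D` on any set of fewer than `κ`
coordinates. So restricting `D` to `ν < κ` coordinates is onto `L ^ ν`, which gives
`α ^ ν ≤ |D|`. For the upper bound (a Hewitt–Marczewski–Pondiczery argument) embed `M` into
`2 ^ T` with `|T| = Δ`: fewer than `κ` points of `M` are separated by fewer than `κ`
coordinates in `T`, so a function on them is coded by fewer than `κ` pairs (a partial map
`T → 2` with small domain, a value in `L`), and there are at most `Δ ^< κ = Δ` codes. That
`Δ ^< κ = Δ` holds for regular `κ` because a `ν`-sequence in `⋃_{ρ<κ} α ^ ρ` is bounded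
below `κ`, and for singular `κ` because then `Δ = β ^ cf κ`. Under the hypothesis of (b)
already `β ^< κ = β`. -/

namespace Cardinal

theorem le_powerlt_self (a : Cardinal.{u}) {κ : Cardinal.{u}} (hκ : 1 < κ) : a ≤ a ^< κ := by
  simpa using le_powerlt a hκ

theorem le_powerlt_of_two_le {a : Cardinal.{u}} (ha : 2 ≤ a) (κ : Cardinal.{u}) :
    κ ≤ a ^< κ :=
  le_of_forall_lt fun c hc =>
    (cantor c).trans_le <| (power_le_power_right ha).trans (le_powerlt a hc)

theorem exists_mk_Iio_eq {κ c : Cardinal.{u}} (hc : c < κ) :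
    ∃ o : κ.ord.ToType, #(Iio o) = c := by
  have hc' : c.ord < Ordinal.type (α := κ.ord.ToType) (· < ·) := by simpa using hc
  refine ⟨Ordinal.enum (· < ·) ⟨c.ord, hc'⟩, ?_⟩
  have := Ordinal.card_typein (α := κ.ord.ToType) (r := (· < ·))
    (Ordinal.enum (· < ·) ⟨c.ord, hc'⟩)
  rw [Ordinal.typein_enum, card_ord] at this
  exact this.symm

theorem mk_bounded_set_lt_le (X : Type u) (κ : Cardinal.{u}) :
    #{S : Set X // #S < κ} ≤ κ * max #X ℵ₀ ^< κ := by
  let f : (Σ o : κ.ord.ToType, {S : Set X // #S ≤ #(Iio o)}) → {S : Set X // #S < κ} :=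
    fun S => ⟨S.2, S.2.2.trans_lt (by simpa using mk_Iio_lt S.1)⟩
  have hf : Function.Surjective f := fun S => by
    obtain ⟨o, ho⟩ := exists_mk_Iio_eq S.2
    exact ⟨⟨o, S.1, ho.ge⟩, rfl⟩
  calc #{S : Set X // #S < κ} ≤ sum fun o : κ.ord.ToType => #{S : Set X // #S ≤ #(Iio o)} :=
        (mk_le_of_surjective hf).trans_eq (mk_sigma _)
    _ ≤ sum fun _ : κ.ord.ToType => max #X ℵ₀ ^< κ := sum_le_sum _ _ fun o =>
        (mk_bounded_set_le X _).trans (le_powerlt _ (by simpa using mk_Iio_lt o))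
    _ = κ * max #X ℵ₀ ^< κ := by rw [sum_const', mk_ord_toType]

theorem mk_bounded_set_lt_le_of_powerlt_le {X : Type u} {κ Δ : Cardinal.{u}} (hΔ : ℵ₀ ≤ Δ)
    (hκΔ : κ ≤ Δ) (hpow : Δ ^< κ ≤ Δ) (hX : #X ≤ Δ) :
    #{S : Set X // #S < κ} ≤ Δ := by
  refine (mk_bounded_set_lt_le X κ).trans (mul_le_of_le hΔ hκΔ (le_trans ?_ hpow))
  exact powerlt_le.2 fun c hc => (power_le_power_right (max_le hX hΔ)).trans (le_powerlt Δ hc)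

theorem mk_arrow_sigma_le_of_lt_cof {W : Type u} [LinearOrder W] {N : Type u} (A : W → Type u)
    (hN : #N < Order.cof W) :
    #(N → Σ w, A w) ≤ sum fun w : W => #(N → Σ v : Iio w, A v) := by
  rw [← mk_sigma]
  refine mk_le_of_surjective (f := fun g n => ⟨(g.2 n).1, (g.2 n).2⟩) fun f => ?_
  obtain ⟨w, hw⟩ : ∃ w, ∀ n, (f n).1 < w := by
    have : ¬ IsCofinal (range fun n => (f n).1) := fun h =>
      ((Order.cof_le h).trans mk_range_le).not_gt hN
    simpa [IsCofinal] using this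
  exact ⟨⟨w, fun n => ⟨⟨(f n).1, hw n⟩, (f n).2⟩⟩, rfl⟩

theorem powerlt_power_le_of_isRegular {κ b ν : Cardinal.{u}} (hκ : κ.IsRegular) (hb : 2 ≤ b)
    (hν : ν < κ) : (b ^< κ) ^ ν ≤ b ^< κ := by
  have hκb : κ ≤ b ^< κ := le_powerlt_of_two_le hb κ
  induction b using inductionOn with | mk Y
  induction ν using inductionOn with | mk N
  let A : κ.ord.ToType → Type u := fun o => Iio o → Y
  have hA : #Y ^< κ ≤ #(Σ o, A o) := powerlt_le.2 fun c hc => by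
    obtain ⟨o, rfl⟩ := exists_mk_Iio_eq hc
    exact (power_def _ _).trans_le <|
      mk_le_of_injective (f := Sigma.mk (β := A) o) sigma_mk_injective
  have hsegment : ∀ o, #(N → Σ v : Iio o, A v.1) ≤ #Y ^< κ := fun o => by
    set c := #(Iio o)
    have hY : #Y ≠ 0 := (two_pos.trans_le hb).ne'
    have hsigma : #(Σ v : Iio o, A v.1) ≤ #Y ^ (c + c) :=
      calc #(Σ v : Iio o, A v.1) = sum fun v : Iio o => #Y ^ #(Iio v.1) := by
            simp only [mk_sigma, A, power_def]
        _ ≤ sum fun _ : Iio o => #Y ^ c := sum_le_sum _ _ fun v =>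
            power_le_power_left hY (mk_le_mk_of_subset (Iio_subset_Iio v.2.le))
        _ = c * #Y ^ c := sum_const' _ _
        _ ≤ #Y ^ c * #Y ^ c := mul_le_mul_left ((cantor c).le.trans (power_le_power_right hb)) _
        _ = #Y ^ (c + c) := (power_add ..).symm
    have hc : c < κ := by simpa using mk_Iio_lt o
    calc #(N → Σ v : Iio o, A v.1) = #(Σ v : Iio o, A v.1) ^ #N := (power_def _ _).symm
      _ ≤ (#Y ^ (c + c)) ^ #N := power_le_power_right hsigma
      _ = #Y ^ ((c + c) * #N) := (power_mul ..).symm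
      _ ≤ #Y ^< κ := le_powerlt _ <|
          mul_lt_of_lt hκ.aleph0_le (add_lt_of_lt hκ.aleph0_le hc hc) hν
  have hN : #N < Order.cof κ.ord.ToType := by rwa [Ordinal.cof_toType, hκ.cof_ord]
  calc (#Y ^< κ) ^ #N ≤ #(Σ o, A o) ^ #N := power_le_power_right hA
    _ = #(N → Σ o, A o) := power_def _ _
    _ ≤ sum fun _ : κ.ord.ToType => #Y ^< κ :=
        (mk_arrow_sigma_le_of_lt_cof A hN).trans (sum_le_sum _ _ hsegment)
    _ = κ * #Y ^< κ := by rw [sum_const', mk_ord_toType]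
    _ ≤ #Y ^< κ := mul_le_of_le (hκ.aleph0_le.trans hκb) hκb le_rfl

theorem power_le_powerlt_power_cof (a : Cardinal.{u}) {κ : Cardinal.{u}} (hκ : ℵ₀ ≤ κ) :
    a ^ κ ≤ (a ^< κ) ^ κ.ord.cof := by
  rcases eq_or_ne a 0 with rfl | ha
  · rw [zero_power (aleph0_pos.trans_le hκ).ne']
    exact zero_le
  induction κ using Cardinal.inductionOn with | mk W
  obtain ⟨_, _, hW⟩ := exists_ord_eq_type_lt W
  have : NoMaxOrder W := by
    rw [← Ordinal.isSuccPrelimit_type_lt_iff, ← hW]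
    exact (isSuccLimit_ord hκ).isSuccPrelimit
  obtain ⟨s, hs, hs'⟩ := Order.exists_cof_eq W
  have hcover : #W ≤ sum fun i : s => #(Iio i.1) := by
    rw [← mk_univ, ← isCofinal_iff_iUnion_Iio_eq_univ.1 hs, biUnion_eq_iUnion]
    exact mk_iUnion_le_sum_mk
  rw [hW, Ordinal.cof_type, ← hs']
  calc a ^ #W ≤ a ^ sum fun i : s => #(Iio i.1) := power_le_power_left ha hcover
    _ = prod fun i : s => a ^ #(Iio i.1) := power_sum _ _
    _ ≤ prod fun _ : s => a ^< #W := prod_le_prod _ _ fun i => le_powerlt a (mk_Iio_lt i.1 hW)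
    _ = (a ^< #W) ^ #s := prod_const' _ _

theorem powerlt_powerlt_le_power {a κ : Cardinal.{u}} (ha : a ≠ 0) (hκ : ℵ₀ ≤ κ) :
    (a ^< κ) ^< κ ≤ a ^ κ := by
  have h : a ^< κ ≤ a ^ κ := powerlt_le.2 fun c hc => power_le_power_left ha hc.le
  refine powerlt_le.2 fun c hc => ?_
  calc (a ^< κ) ^ c ≤ (a ^ κ) ^ c := power_le_power_right h
    _ = a ^ (κ * c) := (power_mul ..).symm
    _ ≤ a ^ κ := power_le_power_left ha (mul_le_of_le hκ le_rfl hc.le)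

theorem powerlt_powerlt_powerlt_le {a κ : Cardinal.{u}} (ha : 2 ≤ a) (hκ : ℵ₀ ≤ κ) :
    ((a ^< κ) ^< κ) ^< κ ≤ (a ^< κ) ^< κ := by
  have h2 : 2 ≤ a ^< κ := ha.trans (le_powerlt_self a (one_lt_aleph0.trans_le hκ))
  refine powerlt_le.2 fun ν hν => ?_
  rcases isRegular_or_isSingular hκ with hreg | hsing
  · exact powerlt_power_le_of_isRegular hreg h2 hν
  · have hcof : (a ^< κ) ^< κ ≤ (a ^< κ) ^ κ.ord.cof :=
      (powerlt_powerlt_le_power (two_pos.trans_le ha).ne' hκ).trans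
        (power_le_powerlt_power_cof a hκ)
    calc ((a ^< κ) ^< κ) ^ ν ≤ ((a ^< κ) ^ κ.ord.cof) ^ ν := power_le_power_right hcof
      _ = (a ^< κ) ^ (κ.ord.cof * ν) := (power_mul ..).symm
      _ ≤ (a ^< κ) ^< κ := le_powerlt _ (mul_lt_of_lt hκ hsing.cof_ord_lt hν)

theorem powerlt_powerlt_eq_of_isRegular_or {a κ : Cardinal.{u}} (ha : 2 ≤ a)
    (hκ : ℵ₀ ≤ κ) (h : κ.IsRegular ∨ ∃ ν < κ, a ^ ν = a ^< κ) :
    (a ^< κ) ^< κ = a ^< κ := by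
  refine le_antisymm (powerlt_le.2 fun ρ hρ => ?_)
    (le_powerlt_self _ (one_lt_aleph0.trans_le hκ))
  rcases h with hreg | ⟨ν, hν, hpow⟩
  · exact powerlt_power_le_of_isRegular hreg ha hρ
  · calc (a ^< κ) ^ ρ = a ^ (ν * ρ) := by rw [← hpow, power_mul]
      _ ≤ a ^< κ := le_powerlt a (mul_lt_of_lt hκ hν hρ)

end Cardinal

open Topology Function

theorem dens_le_mk {Y : Type u} [TopologicalSpace Y] {D : Set Y} (hD : Dense D) :
    dens Y ≤ #D :=
  csInf_le' ⟨D, hD, rfl⟩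

theorem le_dens {Y : Type u} [TopologicalSpace Y] {c : Cardinal.{u}}
    (h : ∀ D : Set Y, Dense D → c ≤ #D) : c ≤ dens Y :=
  le_csInf ⟨_, Set.univ, dense_univ, rfl⟩ fun _ ⟨D, hD, hc⟩ => hc ▸ h D hD

def Interpolates (κ : Cardinal.{u}) {ι : Type u} {X : ι → Type u} (D : Set (∀ i, X i)) :
    Prop :=
  ∀ s : Set ι, #s < κ → ∀ p : ∀ i, X i, ∃ d ∈ D, ∀ i ∈ s, d i = p i

theorem mk_pi_le_of_interpolates {κ : Cardinal.{u}} {ι : Type u} {X : ι → Type u}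
    [∀ i, Nonempty (X i)] {D : Set (∀ i, X i)} (hD : Interpolates κ D)
    {s : Set ι} (hs : #s < κ) : #(∀ i : s, X i) ≤ #D := by
  classical
  refine mk_le_of_surjective (f := fun (d : D) (i : s) => d.1 i) fun p => ?_
  obtain ⟨d, hdD, hd⟩ :=
    hD s hs fun i => if h : i ∈ s then p ⟨i, h⟩ else Classical.arbitrary _
  exact ⟨⟨d, hdD⟩, funext fun i => (hd i i.2).trans (dif_pos i.2)⟩

section BoxTopology

variable {κ : Cardinal.{u}} {ι : Type u} {X : ι → Type u} [∀ i, TopologicalSpace (X i)]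

theorem isTopologicalBasis_boxTopology (hκ : ℵ₀ ≤ κ) :
    @IsTopologicalBasis (∀ i, X i) (boxTopology κ X)
      {S | ∃ U : ∀ i, Set (X i), (∀ i, IsOpen (U i)) ∧
        #{i | U i ≠ Set.univ} < κ ∧ S = pi Set.univ U} := by
  let _ := boxTopology κ X
  refine ⟨?_, ?_, rfl⟩
  · rintro _ ⟨U, hU, hUκ, rfl⟩ _ ⟨V, hV, hVκ, rfl⟩ x hx
    have hsupp :
        {i | U i ∩ V i ≠ Set.univ} ⊆ {i | U i ≠ Set.univ} ∪ {i | V i ≠ Set.univ} :=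
      fun i hi => by
        by_contra h
        simp_all
    refine ⟨pi Set.univ fun i => U i ∩ V i,
      ⟨_, fun i => (hU i).inter (hV i), ?_, rfl⟩, ?_, ?_⟩
    · exact (mk_le_mk_of_subset hsupp).trans_lt
        ((mk_union_le _ _).trans_lt (add_lt_of_lt hκ hUκ hVκ))
    · rwa [pi_inter_distrib]
    · rw [pi_inter_distrib]
  · refine sUnion_eq_univ_iff.2 fun x =>
      ⟨Set.univ, ⟨fun _ => Set.univ, fun _ => isOpen_univ, ?_, ?_⟩, trivial⟩
    · simpa using aleph0_pos.trans_le hκ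
    · simp

theorem dense_of_interpolates (hκ : ℵ₀ ≤ κ) {D : Set (∀ i, X i)}
    (hD : Interpolates κ D) : @Dense _ (boxTopology κ X) D := by
  let _ := boxTopology κ X
  rw [(isTopologicalBasis_boxTopology hκ).dense_iff]
  rintro _ ⟨U, -, hUκ, rfl⟩ ⟨x, hx⟩
  obtain ⟨d, hdD, hd⟩ := hD _ hUκ x
  refine ⟨d, fun i _ => ?_, hdD⟩
  by_cases hi : U i = Set.univ
  · simp [hi]
  · rw [hd i hi]
    exact hx i trivial

theorem isOpen_setOf_forall_eq [∀ i, DiscreteTopology (X i)] {s : Set ι} (hs : #s < κ)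
    (p : ∀ i, X i) : IsOpen[boxTopology κ X] {x | ∀ i ∈ s, x i = p i} := by
  classical
  refine isOpen_generateFrom_of_mem
    ⟨fun i => if i ∈ s then {p i} else Set.univ, fun _ => isOpen_discrete _, ?_, ?_⟩
  · refine (mk_le_mk_of_subset fun i hi => ?_).trans_lt hs
    by_contra h
    simp [h] at hi
  · ext x
    simp only [mem_ofPred_eq, mem_pi, mem_univ, true_implies]
    refine forall_congr' fun i => ?_
    split_ifs with hi <;> simp [hi]

theorem Dense.interpolates [∀ i, DiscreteTopology (X i)] {D : Set (∀ i, X i)}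
    (hD : @Dense _ (boxTopology κ X) D) : Interpolates κ D := fun s hs p => by
  let _ := boxTopology κ X
  obtain ⟨d, hd, hdD⟩ :=
    hD.inter_open_nonempty _ (isOpen_setOf_forall_eq hs p) ⟨p, fun _ _ => rfl⟩
  exact ⟨d, hdD, hd⟩

end BoxTopology

section Interpolation

variable {κ : Cardinal.{u}} {M T L : Type u}

theorem exists_mk_lt_injOn_restrict {B : Type*} (hκ : ℵ₀ ≤ κ) {e : M → T → B}
    (he : Injective e) {s : Set M} (hs : #s < κ) :
    ∃ E : Set T, #E < κ ∧ InjOn (fun m (t : E) => e m t) s := by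
  have hsep : ∀ z : {z : s × s // z.1 ≠ z.2}, ∃ t, e z.1.1 t ≠ e z.1.2 t := fun z => by
    by_contra! h
    exact z.2 (Subtype.ext (he (funext h)))
  choose sep hsep using hsep
  refine ⟨range sep, mk_range_le.trans_lt <| (mk_subtype_le _).trans_lt ?_, ?_⟩
  · rw [mk_prod, lift_id]
    exact mul_lt_of_lt hκ hs hs
  · intro m hm m' hm' h
    by_contra hne
    let z : {z : s × s // z.1 ≠ z.2} :=
      ⟨(⟨m, hm⟩, ⟨m', hm'⟩), fun h => hne (congrArg Subtype.val h)⟩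
    exact hsep z (congrFun h ⟨sep z, mem_range_self z⟩)

theorem exists_interpolates_of_injective [Nonempty L] (hκ : ℵ₀ ≤ κ) {e : M → T → Bool}
    (he : Injective e) :
    ∃ D : Set (M → L), Interpolates κ D ∧
      #D ≤ #{V : Set ({G : Set (T × Bool) // #G < κ} × L) // #V < κ} := by
  classical
  let F : {V : Set ({G : Set (T × Bool) // #G < κ} × L) // #V < κ} → M → L := fun V m =>
    if h : ∃ w ∈ V.1, ∀ tb ∈ w.1.1, e m tb.1 = tb.2 then h.choose.2
    else Classical.arbitrary L
  refine ⟨range F, fun s hs p => ?_, mk_range_le⟩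
  obtain ⟨E, hE, hinj⟩ := exists_mk_lt_injOn_restrict hκ he hs
  let G : M → {G : Set (T × Bool) // #G < κ} := fun m =>
    ⟨(fun t => (t, e m t)) '' E, mk_image_le.trans_lt hE⟩
  let V : Set ({G : Set (T × Bool) // #G < κ} × L) := range fun m : s => (G m, p m)
  refine ⟨F ⟨V, mk_range_le.trans_lt hs⟩, mem_range_self _, fun m hm => ?_⟩
  have hex : ∃ w ∈ V, ∀ tb ∈ w.1.1, e m tb.1 = tb.2 :=
    ⟨(G m, p m), ⟨⟨m, hm⟩, rfl⟩, by rintro _ ⟨t, -, rfl⟩; rfl⟩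
  obtain ⟨⟨⟨m', hm'⟩, hw⟩, hwm⟩ := hex.choose_spec
  rw [← hw] at hwm
  simp only [F, dif_pos hex, ← hw]
  exact congrArg p (hinj hm' hm (funext fun t => (hwm _ ⟨t, t.2, rfl⟩).symm))

theorem exists_interpolates_mk_le [Nonempty L] {Δ : Cardinal.{u}} (hκ : ℵ₀ ≤ κ)
    (hκΔ : κ ≤ Δ) (hΔ : Δ ^< κ ≤ Δ) (hM : #M ≤ 2 ^ Δ) (hL : #L ≤ Δ) :
    ∃ D : Set (M → L), Interpolates κ D ∧ #D ≤ Δ := by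
  induction Δ using inductionOn with | mk T
  obtain ⟨e⟩ : Nonempty (M ↪ (T → Bool)) := by simpa [← le_def] using hM
  obtain ⟨D, hD, hDcard⟩ := exists_interpolates_of_injective (L := L) hκ e.injective
  have hT : ℵ₀ ≤ #T := hκ.trans hκΔ
  have hsmall {Y : Type u} (hY : #Y ≤ #T) : #{S : Set Y // #S < κ} ≤ #T :=
    mk_bounded_set_lt_le_of_powerlt_le hT hκΔ hΔ hY
  refine ⟨D, hD, hDcard.trans (hsmall ?_)⟩
  rw [mk_prod, lift_id, lift_id]
  refine mul_le_of_le hT (hsmall ?_) hL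
  simpa using mul_le_of_le hT le_rfl ((natCast_lt_aleph0 (n := 2)).le.trans hT)

end Interpolation

theorem dens_boxTopology_le {κ Δ : Cardinal.{u}} {M L : Type u} [TopologicalSpace L]
    [Nonempty L] (hκ : ℵ₀ ≤ κ) (hκΔ : κ ≤ Δ) (hΔ : Δ ^< κ ≤ Δ)
    (hM : #M ≤ 2 ^ Δ) (hL : #L ≤ Δ) : @dens (M → L) (boxTopology κ fun _ => L) ≤ Δ := by
  obtain ⟨D, hD, hDΔ⟩ := exists_interpolates_mk_le hκ hκΔ hΔ hM hL
  exact (@dens_le_mk _ (boxTopology κ _) D (dense_of_interpolates hκ hD)).trans hDΔ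

theorem power_le_dens_boxTopology {κ ν : Cardinal.{u}} {M L : Type u} [TopologicalSpace L]
    [DiscreteTopology L] [Nonempty L] (hν : ν < κ) (hνM : ν ≤ #M) :
    #L ^ ν ≤ @dens (M → L) (boxTopology κ fun _ => L) := by
  let _ := boxTopology κ fun _ : M => L
  refine le_dens fun D hD => ?_
  obtain ⟨s, rfl⟩ := le_mk_iff_exists_set.1 hνM
  rw [power_def]
  exact mk_pi_le_of_interpolates hD.interpolates hν

theorem stmt10 (α κ lam μ : Cardinal.{u}) (hα : 2 ≤ α) (hκ : ℵ₀ ≤ κ)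
    (hlam1 : α ≤ lam) (hlam2 : lam ≤ (α ^< κ) ^< κ)
    (hμ1 : κ ≤ μ) (hμ2 : μ ≤ 2 ^ ((α ^< κ) ^< κ))
    (L M : Type u) [TopologicalSpace L] [DiscreteTopology L]
    (hL : #L = lam) (hM : #M = μ) :
    (α ^< κ ≤ @dens (∀ _ : M, L) (boxTopology κ fun _ => L) ∧
      @dens (∀ _ : M, L) (boxTopology κ fun _ => L) ≤ (α ^< κ) ^< κ) ∧
    ((κ.IsRegular ∨ ∃ ν < κ, α ^ ν = α ^< κ) →
      @dens (∀ _ : M, L) (boxTopology κ fun _ => L) = α ^< κ) := by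
  have : Nonempty L := mk_ne_zero_iff.1 (hL ▸ (two_pos.trans_le (hα.trans hlam1)).ne')
  have hlower : α ^< κ ≤ @dens (M → L) (boxTopology κ fun _ => L) :=
    powerlt_le.2 fun ν hν => (power_le_power_right (hlam1.trans hL.ge)).trans
      (power_le_dens_boxTopology hν (hM ▸ hν.le.trans hμ1))
  have hκΔ : κ ≤ (α ^< κ) ^< κ :=
    (le_powerlt_of_two_le hα κ).trans (le_powerlt_self _ (one_lt_aleph0.trans_le hκ))
  have hupper : @dens (M → L) (boxTopology κ fun _ => L) ≤ (α ^< κ) ^< κ :=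
    dens_boxTopology_le hκ hκΔ (powerlt_powerlt_powerlt_le hα hκ) (hM ▸ hμ2) (hL ▸ hlam2)
  refine ⟨⟨hlower, hupper⟩, fun h => le_antisymm ?_ hlower⟩
  exact hupper.trans_eq (powerlt_powerlt_eq_of_isRegular_or hα hκ h)
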